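/- arXiv:2309.11240 — 2 statements merged into one kernel-verified Lean document; each statement's English description precedes it below -/
import Mathlib

section
/- For roots w of φ₁ and v of φ₂, the transpose of the double ideal matrix H*_{φ₁,φ₂}(f₁,f₂) maps (1, w, …, w^{n₁−1}, 0, …, 0)ᵀ to f₁(w)·(1, w, …, w^{m−1})ᵀ and maps (0, …, 0, 1, v, …, v^{n₂−1})ᵀ to f₂(v)·(1, v, …, v^{m−1})ᵀ. -/
/-!
The row vector `(1, w, …, w^{n-1})` is a left eigenvector of the rotation matrix `H_φ` with
eigenvalue `w` whenever `φ(w) = 0`: multiplying it into the subdiagonal columns shifts the powers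
of `w`, and in the last column `-Σ φ.coeff i • wⁱ = wⁿ` because `φ` is monic of degree `n`.
Hence it is a left eigenvector of `H_φ^j` with eigenvalue `wʲ`, and entry `j` of the transposed
double ideal matrix applied to `(1, w, …, w^{n₁-1}, 0, …, 0)` is
`(1, w, …) ⬝ᵥ H₁^j f₁ = wʲ · ((1, w, …) ⬝ᵥ f₁) = wʲ f₁(w)`; likewise for the lower block.
-/

open Polynomial Matrix

/-- The rotation matrix `H_φ` of a monic polynomial
`φ(x) = xⁿ − φ_{n-1}x^{n-1} − ⋯ − φ₁x − φ₀` (note `φᵢ = -(coeff φ i)` for `i < n`). -/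
def rotMat (n : ℕ) (φ : Polynomial ℂ) : Matrix (Fin n) (Fin n) ℂ :=
  Matrix.of fun i j =>
    if (j : ℕ) + 1 < n then (if (i : ℕ) = (j : ℕ) + 1 then 1 else 0)
    else -φ.coeff (i : ℕ)

/-- The polynomial `f(x) = Σ_{j=0}^{n-1} fⱼ xʲ` associated to a vector `f`. -/
noncomputable def vecPoly (n : ℕ) (f : Fin n → ℂ) : Polynomial ℂ :=
  ∑ j : Fin n, Polynomial.C (f j) * Polynomial.X ^ (j : ℕ)

/-- The `(n₁+n₂) × m` double ideal matrix, stacking `[f₁, H₁f₁, …, H₁^{m-1}f₁]`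
on top of `[f₂, H₂f₂, …, H₂^{m-1}f₂]`. -/
noncomputable def dblIdealMat (n₁ n₂ m : ℕ) (H₁ : Matrix (Fin n₁) (Fin n₁) ℂ)
    (H₂ : Matrix (Fin n₂) (Fin n₂) ℂ) (f₁ : Fin n₁ → ℂ) (f₂ : Fin n₂ → ℂ) :
    Matrix (Fin n₁ ⊕ Fin n₂) (Fin m) ℂ :=
  Matrix.of fun i j =>
    Sum.elim ((H₁ ^ (j : ℕ)).mulVec f₁) ((H₂ ^ (j : ℕ)).mulVec f₂) i

theorem Polynomial.Monic.sum_fin_coeff_mul_pow_eq_neg_pow {R : Type*} [CommRing R]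
    {φ : R[X]} {n : ℕ} (hm : φ.Monic) (hd : φ.natDegree = n) {w : R} (hw : φ.IsRoot w) :
    ∑ i : Fin n, φ.coeff i * w ^ (i : ℕ) = -w ^ n := by
  have h := hw.eq_zero
  rw [eval_eq_sum_range, hd, Finset.sum_range_succ, ← hd, hm.coeff_natDegree, hd, one_mul] at h
  rw [Fin.sum_univ_eq_sum_range (fun i => φ.coeff i * w ^ i)]
  exact eq_neg_of_add_eq_zero_left h

theorem vecMul_rotMat_of_isRoot {n : ℕ} {φ : ℂ[X]} (hm : φ.Monic) (hd : φ.natDegree = n)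
    {w : ℂ} (hw : φ.IsRoot w) :
    (fun i : Fin n => w ^ (i : ℕ)) ᵥ* rotMat n φ = w • fun i : Fin n => w ^ (i : ℕ) := by
  funext k
  simp only [vecMul, dotProduct, rotMat, of_apply, Pi.smul_apply, smul_eq_mul]
  by_cases hk : (k : ℕ) + 1 < n
  · simp only [if_pos hk, mul_ite, mul_one, mul_zero]
    rw [Finset.sum_eq_single (⟨(k : ℕ) + 1, hk⟩ : Fin n)]
    · simp [pow_succ']
    · intro b _ hb
      simp [Fin.ext_iff.not.mp hb]
    · simp
  · have hkn : (k : ℕ) + 1 = n := le_antisymm k.2 (not_lt.mp hk)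
    simp only [if_neg hk, mul_neg, Finset.sum_neg_distrib]
    simp_rw [mul_comm (w ^ _)]
    rw [hm.sum_fin_coeff_mul_pow_eq_neg_pow hd hw, neg_neg, ← pow_succ', hkn]

theorem vecMul_pow_of_vecMul_eq_smul {ι R : Type*} [Fintype ι] [DecidableEq ι] [CommSemiring R]
    {A : Matrix ι ι R} {x : ι → R} {w : R} (hx : x ᵥ* A = w • x) (j : ℕ) :
    x ᵥ* (A ^ j) = w ^ j • x := by
  induction j with
  | zero => simp
  | succ j ih => rw [pow_succ, ← vecMul_vecMul, ih, smul_vecMul, hx, smul_smul, pow_succ]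

theorem dblIdealMat_transpose_mulVec_inl {n₁ n₂ m : ℕ} {H₁ : Matrix (Fin n₁) (Fin n₁) ℂ}
    (H₂ : Matrix (Fin n₂) (Fin n₂) ℂ) (f₁ : Fin n₁ → ℂ) (f₂ : Fin n₂ → ℂ) {x : Fin n₁ → ℂ}
    {w : ℂ} (hx : x ᵥ* H₁ = w • x) :
    (dblIdealMat n₁ n₂ m H₁ H₂ f₁ f₂)ᵀ *ᵥ Sum.elim x 0 =
      (f₁ ⬝ᵥ x) • fun j : Fin m => w ^ (j : ℕ) := by
  funext j
  have hj : ((dblIdealMat n₁ n₂ m H₁ H₂ f₁ f₂)ᵀ *ᵥ Sum.elim x 0) j = (H₁ ^ (j : ℕ) *ᵥ f₁) ⬝ᵥ x := by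
    simp [mulVec, dotProduct, dblIdealMat]
  rw [hj, dotProduct_comm, dotProduct_mulVec, vecMul_pow_of_vecMul_eq_smul hx, smul_dotProduct,
    dotProduct_comm, Pi.smul_apply, smul_eq_mul, smul_eq_mul, mul_comm]

theorem dblIdealMat_transpose_mulVec_inr {n₁ n₂ m : ℕ} (H₁ : Matrix (Fin n₁) (Fin n₁) ℂ)
    {H₂ : Matrix (Fin n₂) (Fin n₂) ℂ} (f₁ : Fin n₁ → ℂ) (f₂ : Fin n₂ → ℂ) {y : Fin n₂ → ℂ}
    {v : ℂ} (hy : y ᵥ* H₂ = v • y) :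
    (dblIdealMat n₁ n₂ m H₁ H₂ f₁ f₂)ᵀ *ᵥ Sum.elim 0 y =
      (f₂ ⬝ᵥ y) • fun j : Fin m => v ^ (j : ℕ) := by
  funext j
  have hj : ((dblIdealMat n₁ n₂ m H₁ H₂ f₁ f₂)ᵀ *ᵥ Sum.elim 0 y) j = (H₂ ^ (j : ℕ) *ᵥ f₂) ⬝ᵥ y := by
    simp [mulVec, dotProduct, dblIdealMat]
  rw [hj, dotProduct_comm, dotProduct_mulVec, vecMul_pow_of_vecMul_eq_smul hy, smul_dotProduct,
    dotProduct_comm, Pi.smul_apply, smul_eq_mul, smul_eq_mul, mul_comm]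

theorem dblIdealMat_transpose_mulVec_general (n₁ n₂ m : ℕ)
    (φ₁ φ₂ : Polynomial ℂ) (hm₁ : φ₁.Monic) (hm₂ : φ₂.Monic)
    (hd₁ : φ₁.natDegree = n₁) (hd₂ : φ₂.natDegree = n₂)
    (f₁ : Fin n₁ → ℂ) (f₂ : Fin n₂ → ℂ)
    (w v : ℂ) (hw : φ₁.IsRoot w) (hv : φ₂.IsRoot v) :
    (dblIdealMat n₁ n₂ m (rotMat n₁ φ₁) (rotMat n₂ φ₂) f₁ f₂)ᵀ.mulVec
        (Sum.elim (fun a : Fin n₁ => w ^ (a : ℕ)) (fun _ : Fin n₂ => 0)) =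
      (∑ j : Fin n₁, f₁ j * w ^ (j : ℕ)) • (fun i : Fin m => w ^ (i : ℕ)) ∧
    (dblIdealMat n₁ n₂ m (rotMat n₁ φ₁) (rotMat n₂ φ₂) f₁ f₂)ᵀ.mulVec
        (Sum.elim (fun _ : Fin n₁ => 0) (fun b : Fin n₂ => v ^ (b : ℕ))) =
      (∑ j : Fin n₂, f₂ j * v ^ (j : ℕ)) • (fun i : Fin m => v ^ (i : ℕ)) :=
  ⟨dblIdealMat_transpose_mulVec_inl _ f₁ f₂ (vecMul_rotMat_of_isRoot hm₁ hd₁ hw),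
    dblIdealMat_transpose_mulVec_inr _ f₁ f₂ (vecMul_rotMat_of_isRoot hm₂ hd₂ hv)⟩

/-- For roots `w` of `φ₁` and `v` of `φ₂`, the transpose of the double ideal matrix maps
`(1, w, …, w^{n₁−1}, 0, …, 0)ᵀ` to `f₁(w)·(1, w, …, w^{m−1})ᵀ` and maps
`(0, …, 0, 1, v, …, v^{n₂−1})ᵀ` to `f₂(v)·(1, v, …, v^{m−1})ᵀ`. -/
theorem dblIdealMat_transpose_mulVec (n₁ n₂ m : ℕ) (hn₁ : 0 < n₁) (hn₂ : 0 < n₂)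
    (φ₁ φ₂ : Polynomial ℂ) (hm₁ : φ₁.Monic) (hm₂ : φ₂.Monic)
    (hd₁ : φ₁.natDegree = n₁) (hd₂ : φ₂.natDegree = n₂)
    (h₁0 : φ₁.coeff 0 ≠ 0) (h₂0 : φ₂.coeff 0 ≠ 0)
    (f₁ : Fin n₁ → ℂ) (f₂ : Fin n₂ → ℂ)
    (w v : ℂ) (hw : φ₁.IsRoot w) (hv : φ₂.IsRoot v) :
    (dblIdealMat n₁ n₂ m (rotMat n₁ φ₁) (rotMat n₂ φ₂) f₁ f₂)ᵀ.mulVec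
        (Sum.elim (fun a : Fin n₁ => w ^ (a : ℕ)) (fun _ : Fin n₂ => 0)) =
      (∑ j : Fin n₁, f₁ j * w ^ (j : ℕ)) • (fun i : Fin m => w ^ (i : ℕ)) ∧
    (dblIdealMat n₁ n₂ m (rotMat n₁ φ₁) (rotMat n₂ φ₂) f₁ f₂)ᵀ.mulVec
        (Sum.elim (fun _ : Fin n₁ => 0) (fun b : Fin n₂ => v ^ (b : ℕ))) =
      (∑ j : Fin n₂, f₂ j * v ^ (j : ℕ)) • (fun i : Fin m => v ^ (i : ℕ)) :=
  dblIdealMat_transpose_mulVec_general n₁ n₂ m φ₁ φ₂ hm₁ hm₂ hd₁ hd₂ f₁ f₂ w v hw hv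
end

section
/- The square double ideal matrix H*_{φ₁,φ₂}(f₁,f₂)_{(n₁+n₂)×(n₁+n₂)} has full rank if and only if gcd(f₁(x),φ₁(x)) = 1, gcd(f₂(x),φ₂(x)) = 1, and gcd(φ₁(x),φ₂(x)) = 1. -/
open Polynomial Matrix

theorem vecPoly_coeff (n : ℕ) (f : Fin n → ℂ) (k : ℕ) :
    (vecPoly n f).coeff k = if h : k < n then f ⟨k, h⟩ else 0 := by
  unfold vecPoly
  rw [Polynomial.finset_sum_coeff]
  simp only [Polynomial.coeff_C_mul, Polynomial.coeff_X_pow]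
  split
  · next h =>
    rw [Finset.sum_eq_single (⟨k, h⟩ : Fin n)]
    · simp
    · intro b _ hb
      simp only [mul_ite, mul_one, mul_zero, ite_eq_right_iff]
      intro hbk; exact absurd (Fin.ext hbk.symm) hb
    · simp
  · next h =>
    apply Finset.sum_eq_zero
    intro b _
    simp only [mul_ite, mul_one, mul_zero, ite_eq_right_iff]
    intro hbk; exact absurd (hbk ▸ b.isLt) h

theorem vecPoly_degree (n : ℕ) (f : Fin n → ℂ) : (vecPoly n f).degree < n := by
  apply lt_of_le_of_lt (Polynomial.degree_sum_le _ _)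
  rw [Finset.sup_lt_iff (by exact_mod_cast WithBot.bot_lt_coe n)]
  intro b _
  apply lt_of_le_of_lt (Polynomial.degree_C_mul_X_pow_le _ _)
  exact_mod_cast b.isLt

theorem vecPoly_eq_of_degree_lt (n : ℕ) (p : Polynomial ℂ) (hp : p.degree < n) :
    vecPoly n (fun j => p.coeff j) = p := by
  ext k
  rw [vecPoly_coeff]
  split
  · rfl
  · next h =>
    exact (Polynomial.coeff_eq_zero_of_degree_lt (hp.trans_le (by exact_mod_cast not_lt.1 h))).symm

theorem vecPoly_smul (n : ℕ) (c : ℂ) (f : Fin n → ℂ) :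
    vecPoly n (c • f) = Polynomial.C c * vecPoly n f := by
  unfold vecPoly
  rw [Finset.mul_sum]
  congr 1; ext j; simp [mul_assoc]

theorem vecPoly_add (n : ℕ) (f g : Fin n → ℂ) :
    vecPoly n (f + g) = vecPoly n f + vecPoly n g := by
  unfold vecPoly
  rw [← Finset.sum_add_distrib]
  congr 1; ext j; simp [add_mul]

theorem rotMat_mulVec (n : ℕ) (hn : 0 < n) (φ : Polynomial ℂ) (f : Fin n → ℂ) (i : Fin n) :
    (rotMat n φ).mulVec f i =
      (if h : 0 < (i : ℕ) then f ⟨(i : ℕ) - 1, lt_of_le_of_lt (Nat.sub_le _ _) i.isLt⟩ else 0)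
        - φ.coeff i * f ⟨n - 1, Nat.sub_lt hn one_pos⟩ := by
  have hi := i.isLt
  have key : ∀ j : Fin n, rotMat n φ i j * f j =
      (if (i : ℕ) = (j : ℕ) + 1 then f j else 0)
        + (if (j : ℕ) + 1 = n then -φ.coeff i * f j else 0) := by
    intro j
    rcases lt_or_eq_of_le (Nat.succ_le_of_lt j.isLt) with h | h
    · simp only [rotMat, Matrix.of_apply, if_pos h, if_neg (Nat.ne_of_lt h), add_zero]
      split <;> simp
    · simp only [rotMat, Matrix.of_apply, if_neg (by omega : ¬ ((j:ℕ)+1 < n)), if_pos h]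
      rw [if_neg (by omega), zero_add]
  unfold Matrix.mulVec dotProduct
  rw [Finset.sum_congr rfl (fun j _ => key j), Finset.sum_add_distrib]
  have h1 : (∑ j : Fin n, if (i : ℕ) = (j : ℕ) + 1 then f j else 0)
      = (if h : 0 < (i : ℕ) then f ⟨(i : ℕ) - 1, lt_of_le_of_lt (Nat.sub_le _ _) i.isLt⟩
          else 0) := by
    split
    · next h =>
      rw [Finset.sum_eq_single (⟨(i : ℕ) - 1, lt_of_le_of_lt (Nat.sub_le _ _) i.isLt⟩ : Fin n)]
      · rw [if_pos (by simp; omega)]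
      · intro b _ hb
        rw [if_neg]
        intro hib
        exact hb (Fin.ext (by simp; omega))
      · simp
    · next h =>
      apply Finset.sum_eq_zero
      intro b _
      rw [if_neg (by omega)]
  have h2 : (∑ j : Fin n, if (j : ℕ) + 1 = n then -φ.coeff i * f j else 0)
      = -φ.coeff i * f ⟨n - 1, Nat.sub_lt hn one_pos⟩ := by
    rw [Finset.sum_eq_single (⟨n - 1, Nat.sub_lt hn one_pos⟩ : Fin n)]
    · rw [if_pos (by simp; omega)]
    · intro b _ hb
      rw [if_neg]
      intro hbn
      exact hb (Fin.ext (by simp; omega))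
    · simp
  rw [h1, h2]
  ring

theorem vecPoly_rotMat (n : ℕ) (hn : 0 < n) (φ : Polynomial ℂ) (hm : φ.Monic)
    (hd : φ.natDegree = n) (f : Fin n → ℂ) :
    vecPoly n ((rotMat n φ).mulVec f) =
      X * vecPoly n f - Polynomial.C (f ⟨n - 1, Nat.sub_lt hn one_pos⟩) * φ := by
  have hX : ∀ (p : Polynomial ℂ) (k : ℕ),
      (X * p).coeff k = if 1 ≤ k then p.coeff (k - 1) else 0 := by
    intro p k
    rw [← pow_one (X : Polynomial ℂ), Polynomial.coeff_X_pow_mul']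
  ext k
  rw [vecPoly_coeff, Polynomial.coeff_sub, hX, Polynomial.coeff_C_mul]
  split
  · next h =>
    rw [rotMat_mulVec n hn]
    rcases Nat.eq_zero_or_pos k with hk | hk
    · subst hk
      simp [mul_comm]
    · rw [dif_pos hk, if_pos (by omega : 1 ≤ k), vecPoly_coeff, dif_pos (by omega : k - 1 < n)]
      simp [mul_comm]
  · next h =>
    push_neg at h
    rcases Nat.lt_or_ge n k with hk | hk
    · rw [if_pos (by omega), vecPoly_coeff, dif_neg (by omega),
        Polynomial.coeff_eq_zero_of_natDegree_lt (by omega)]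
      ring
    · have hkn : k = n := le_antisymm (by omega) h
      rw [if_pos (by omega : 1 ≤ k), vecPoly_coeff, dif_pos (by omega : k - 1 < n)]
      have hc : φ.coeff k = 1 := by rw [hkn, ← hd]; exact hm.coeff_natDegree
      rw [hc]
      have hk1 : k - 1 = n - 1 := by omega
      simp only [hk1]
      ring

/-- The linear map sending a coefficient vector to the class of its polynomial mod `φ`. -/
noncomputable def toAdj (n : ℕ) (φ : Polynomial ℂ) : (Fin n → ℂ) →ₗ[ℂ] AdjoinRoot φ where
  toFun f := AdjoinRoot.mk φ (vecPoly n f)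
  map_add' f g := by show AdjoinRoot.mk φ (vecPoly n (f+g)) = _; rw [vecPoly_add, map_add]
  map_smul' c f := by
    show AdjoinRoot.mk φ (vecPoly n (c • f)) = c • AdjoinRoot.mk φ (vecPoly n f)
    rw [vecPoly_smul, _root_.map_mul, Algebra.smul_def]; rfl

theorem toAdj_apply (n : ℕ) (φ : Polynomial ℂ) (f : Fin n → ℂ) :
    toAdj n φ f = AdjoinRoot.mk φ (vecPoly n f) := rfl

theorem toAdj_rotMat_pow (n : ℕ) (hn : 0 < n) (φ : Polynomial ℂ) (hm : φ.Monic)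
    (hd : φ.natDegree = n) (f : Fin n → ℂ) (j : ℕ) :
    toAdj n φ (((rotMat n φ) ^ j).mulVec f) =
      AdjoinRoot.root φ ^ j * toAdj n φ f := by
  induction j with
  | zero => simp [Matrix.one_mulVec]
  | succ j ih =>
    rw [pow_succ', ← Matrix.mulVec_mulVec]
    rw [toAdj_apply, vecPoly_rotMat n hn φ hm hd, map_sub, _root_.map_mul, _root_.map_mul,
      AdjoinRoot.mk_X, AdjoinRoot.mk_self, mul_zero, sub_zero, ← toAdj_apply, ih,
      pow_succ']
    ring

theorem toAdj_bijective (n : ℕ) (hn : 0 < n) (φ : Polynomial ℂ) (hm : φ.Monic)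
    (hd : φ.natDegree = n) : Function.Bijective (toAdj n φ) := by
  have hφd : φ.degree = (n : ℕ) := by
    rw [Polynomial.degree_eq_natDegree hm.ne_zero, hd]
  constructor
  · rw [injective_iff_map_eq_zero]
    intro f hf
    rw [toAdj_apply, AdjoinRoot.mk_eq_zero] at hf
    have h0 : vecPoly n f = 0 :=
      Polynomial.eq_zero_of_dvd_of_degree_lt hf (hφd ▸ vecPoly_degree n f)
    funext j
    have := vecPoly_coeff n f j
    rw [h0, Polynomial.coeff_zero, dif_pos j.isLt] at this
    exact this.symm
  · intro b
    obtain ⟨p, rfl⟩ := AdjoinRoot.mk_surjective b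
    refine ⟨fun j => (p %ₘ φ).coeff j, ?_⟩
    rw [toAdj_apply, vecPoly_eq_of_degree_lt n _ (hφd ▸ Polynomial.degree_modByMonic_lt p hm),
      AdjoinRoot.mk_eq_mk]
    rw [Polynomial.modByMonic_eq_sub_mul_div p φ]
    exact ⟨-(p /ₘ φ), by ring⟩

theorem isUnit_mk_iff (φ p : Polynomial ℂ) :
    IsUnit (AdjoinRoot.mk φ p) ↔ IsCoprime p φ := by
  constructor
  · intro h
    obtain ⟨b, hb⟩ := isUnit_iff_exists_inv.mp h
    obtain ⟨q, rfl⟩ := AdjoinRoot.mk_surjective b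
    rw [← _root_.map_mul, ← map_one (AdjoinRoot.mk φ), AdjoinRoot.mk_eq_mk] at hb
    obtain ⟨u, hu⟩ := hb
    exact ⟨q, -u, by linear_combination hu⟩
  · rintro ⟨a, b, hab⟩
    apply IsUnit.of_mul_eq_one (AdjoinRoot.mk φ a)
    rw [← _root_.map_mul, ← map_one (AdjoinRoot.mk φ), AdjoinRoot.mk_eq_mk]
    exact ⟨-b, by linear_combination hab⟩


theorem key_iff (φ₁ φ₂ p₁ p₂ : Polynomial ℂ) :
    (∀ b : AdjoinRoot φ₁ × AdjoinRoot φ₂, ∃ g : Polynomial ℂ,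
        (AdjoinRoot.mk φ₁ (g * p₁), AdjoinRoot.mk φ₂ (g * p₂)) = b) ↔
      IsCoprime p₁ φ₁ ∧ IsCoprime p₂ φ₂ ∧ IsCoprime φ₁ φ₂ := by
  constructor
  · intro h
    obtain ⟨g₁, hg₁⟩ := h (1, 0)
    obtain ⟨g₂, hg₂⟩ := h (0, 1)
    rw [Prod.ext_iff] at hg₁ hg₂
    obtain ⟨hg₁1, hg₁2⟩ := hg₁
    obtain ⟨hg₂1, hg₂2⟩ := hg₂
    simp only [] at hg₁1 hg₁2 hg₂1 hg₂2
    rw [← map_one (AdjoinRoot.mk φ₁), AdjoinRoot.mk_eq_mk] at hg₁1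
    rw [← map_one (AdjoinRoot.mk φ₂), AdjoinRoot.mk_eq_mk] at hg₂2
    rw [AdjoinRoot.mk_eq_zero] at hg₁2 hg₂1
    obtain ⟨u₁, hu₁⟩ := hg₁1
    obtain ⟨u₂, hu₂⟩ := hg₂2
    have hc₁ : IsCoprime p₁ φ₁ := ⟨g₁, -u₁, by linear_combination hu₁⟩
    have hc₂ : IsCoprime p₂ φ₂ := ⟨g₂, -u₂, by linear_combination hu₂⟩
    refine ⟨hc₁, hc₂, ?_⟩
    obtain ⟨h₀, hh₀⟩ := (hc₂.symm).dvd_of_dvd_mul_right hg₁2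
    subst hh₀
    exact ⟨-u₁, h₀ * p₁, by linear_combination hu₁⟩
  · rintro ⟨⟨a₁, b₁, e₁⟩, ⟨a₂, b₂, e₂⟩, ⟨u, v, e⟩⟩ b
    obtain ⟨s, hs⟩ := AdjoinRoot.mk_surjective b.1
    obtain ⟨t, ht⟩ := AdjoinRoot.mk_surjective b.2
    refine ⟨a₁ * (s * v * φ₂) + a₂ * (t * u * φ₁), ?_⟩
    rw [Prod.ext_iff]
    constructor
    · rw [← hs, AdjoinRoot.mk_eq_mk]
      exact ⟨s * (-b₁ - u + b₁ * u * φ₁) + a₂ * t * u * p₁,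
        by linear_combination (s * v * φ₂) * e₁ + (s - s * b₁ * φ₁) * e⟩
    · rw [← ht, AdjoinRoot.mk_eq_mk]
      exact ⟨t * (-b₂ - v + b₂ * v * φ₂) + a₁ * s * v * p₂,
        by linear_combination (t * u * φ₁) * e₂ + (t - t * b₂ * φ₂) * e⟩

theorem aeval_vecPoly {A : Type*} [CommRing A] [Algebra ℂ A] (m : ℕ) (v : Fin m → ℂ) (r : A) :
    Polynomial.aeval r (vecPoly m v) = ∑ j : Fin m, v j • r ^ (j : ℕ) := by
  unfold vecPoly
  rw [map_sum]
  congr 1; ext j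
  rw [_root_.map_mul, Polynomial.aeval_C, map_pow, Polynomial.aeval_X, Algebra.smul_def]

/-- The square double ideal matrix `H*_{φ₁,φ₂}(f₁,f₂)_{(n₁+n₂)×(n₁+n₂)}` has full rank
if and only if `gcd(f₁(x),φ₁(x)) = 1`, `gcd(f₂(x),φ₂(x)) = 1` and `gcd(φ₁(x),φ₂(x)) = 1`. -/
theorem dblIdealMat_fullRank_iff (n₁ n₂ : ℕ) (hn₁ : 0 < n₁) (hn₂ : 0 < n₂)
    (φ₁ φ₂ : Polynomial ℂ) (hm₁ : φ₁.Monic) (hm₂ : φ₂.Monic)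
    (hd₁ : φ₁.natDegree = n₁) (hd₂ : φ₂.natDegree = n₂)
    (h₁0 : φ₁.coeff 0 ≠ 0) (h₂0 : φ₂.coeff 0 ≠ 0)
    (hsq₁ : Squarefree φ₁) (hsq₂ : Squarefree φ₂)
    (f₁ : Fin n₁ → ℂ) (f₂ : Fin n₂ → ℂ) :
    (dblIdealMat n₁ n₂ (n₁ + n₂) (rotMat n₁ φ₁) (rotMat n₂ φ₂) f₁ f₂).rank = n₁ + n₂ ↔
      IsCoprime (vecPoly n₁ f₁) φ₁ ∧ IsCoprime (vecPoly n₂ f₂) φ₂ ∧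
        IsCoprime φ₁ φ₂ := by
  set m := n₁ + n₂ with hm
  set M := dblIdealMat n₁ n₂ m (rotMat n₁ φ₁) (rotMat n₂ φ₂) f₁ f₂ with hM
  set Φ : (Fin n₁ ⊕ Fin n₂ → ℂ) →ₗ[ℂ] AdjoinRoot φ₁ × AdjoinRoot φ₂ :=
    LinearMap.prod ((toAdj n₁ φ₁).comp (LinearMap.funLeft ℂ ℂ Sum.inl))
      ((toAdj n₂ φ₂).comp (LinearMap.funLeft ℂ ℂ Sum.inr)) with hΦ
  have hb₁ := toAdj_bijective n₁ hn₁ φ₁ hm₁ hd₁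
  have hb₂ := toAdj_bijective n₂ hn₂ φ₂ hm₂ hd₂
  have hΦbij : Function.Bijective Φ := by
    constructor
    · intro x y hxy
      rw [hΦ] at hxy
      simp only [LinearMap.prod_apply, LinearMap.comp_apply, Function.prod, Prod.mk.injEq,
        LinearMap.funLeft_apply] at hxy
      have h1 := hb₁.injective hxy.1
      have h2 := hb₂.injective hxy.2
      funext i
      cases i with
      | inl i => exact congrFun h1 i
      | inr i => exact congrFun h2 i
    · rintro ⟨b₁, b₂⟩
      obtain ⟨u₁, hu₁⟩ := hb₁.surjective b₁
      obtain ⟨u₂, hu₂⟩ := hb₂.surjective b₂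
      refine ⟨Sum.elim u₁ u₂, ?_⟩
      rw [hΦ]
      simp only [LinearMap.prod_apply, LinearMap.comp_apply, Function.prod,
        LinearMap.funLeft_apply, Prod.mk.injEq]
      constructor
      · exact hu₁
      · exact hu₂
  -- step 1 : rank = m ↔ surjective mulVec
  have hfin : Module.finrank ℂ (Fin n₁ ⊕ Fin n₂ → ℂ) = m := by
    rw [Module.finrank_fintype_fun_eq_card]
    simp [hm]
  have step1 : M.rank = m ↔ Function.Surjective M.mulVec := by
    have hrk : M.rank = Module.finrank ℂ (LinearMap.range M.mulVecLin) := rfl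
    constructor
    · intro h
      have htop : LinearMap.range M.mulVecLin = ⊤ :=
        Submodule.eq_top_of_finrank_eq (by rw [← hrk, h, hfin])
      rw [LinearMap.range_eq_top] at htop
      intro b
      obtain ⟨v, hv⟩ := htop b
      exact ⟨v, by rw [← Matrix.mulVecLin_apply]; exact hv⟩
    · intro h
      rw [hrk]
      have htop : LinearMap.range M.mulVecLin = ⊤ := by
        rw [LinearMap.range_eq_top]
        intro b
        obtain ⟨v, hv⟩ := h b
        exact ⟨v, by rw [Matrix.mulVecLin_apply]; exact hv⟩
      rw [htop, finrank_top, hfin]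
  -- step 2 : image formula  Φ (M.mulVec v)
  have step2 : ∀ v : Fin m → ℂ,
      Φ (M.mulVec v) = (AdjoinRoot.mk φ₁ (vecPoly m v * vecPoly n₁ f₁),
        AdjoinRoot.mk φ₂ (vecPoly m v * vecPoly n₂ f₂)) := by
    intro v
    have hL : (M.mulVec v) ∘ Sum.inl = ∑ j : Fin m, v j • ((rotMat n₁ φ₁ ^ (j : ℕ)).mulVec f₁) := by
      funext i
      rw [Finset.sum_apply]
      rw [Function.comp_apply, show (M *ᵥ v) (Sum.inl i) = ∑ j : Fin m, M (Sum.inl i) j * v j from rfl]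
      congr 1; ext j
      rw [hM]
      simp only [dblIdealMat, Matrix.of_apply, Sum.elim_inl, Pi.smul_apply, smul_eq_mul]
      ring
    have hR : (M.mulVec v) ∘ Sum.inr = ∑ j : Fin m, v j • ((rotMat n₂ φ₂ ^ (j : ℕ)).mulVec f₂) := by
      funext i
      rw [Finset.sum_apply]
      rw [Function.comp_apply, show (M *ᵥ v) (Sum.inr i) = ∑ j : Fin m, M (Sum.inr i) j * v j from rfl]
      congr 1; ext j
      rw [hM]
      simp only [dblIdealMat, Matrix.of_apply, Sum.elim_inr, Pi.smul_apply, smul_eq_mul]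
      ring
    have key : ∀ (n : ℕ) (hn : 0 < n) (φ : Polynomial ℂ) (hmφ : φ.Monic)
        (hd : φ.natDegree = n) (f : Fin n → ℂ),
        toAdj n φ (∑ j : Fin m, v j • ((rotMat n φ ^ (j : ℕ)).mulVec f))
          = AdjoinRoot.mk φ (vecPoly m v * vecPoly n f) := by
      intro n hn φ hmφ hd f
      rw [map_sum]
      have : ∀ j : Fin m, toAdj n φ (v j • ((rotMat n φ ^ (j : ℕ)).mulVec f))
          = v j • (AdjoinRoot.root φ ^ (j : ℕ) * toAdj n φ f) := by
        intro j
        rw [LinearMap.map_smul, toAdj_rotMat_pow n hn φ hmφ hd]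
      rw [Finset.sum_congr rfl (fun j _ => this j)]
      rw [show (∑ j : Fin m, v j • (AdjoinRoot.root φ ^ (j : ℕ) * toAdj n φ f))
          = (∑ j : Fin m, v j • AdjoinRoot.root φ ^ (j : ℕ)) * toAdj n φ f by
        rw [Finset.sum_mul]; congr 1; ext j; rw [smul_mul_assoc]]
      rw [← aeval_vecPoly, AdjoinRoot.aeval_eq, toAdj_apply, ← _root_.map_mul]
    rw [hΦ]
    simp only [LinearMap.prod_apply, LinearMap.comp_apply, Pi.prod, LinearMap.funLeft_apply]
    show ((toAdj n₁ φ₁) ((M.mulVec v) ∘ Sum.inl), (toAdj n₂ φ₂) ((M.mulVec v) ∘ Sum.inr)) = _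
    rw [hL, key n₁ hn₁ φ₁ hm₁ hd₁ f₁, hR, key n₂ hn₂ φ₂ hm₂ hd₂ f₂]
  -- step 3 : surjectivity ↔ ∀ b ∃ g
  rw [step1]
  have step3 : Function.Surjective M.mulVec ↔
      (∀ b : AdjoinRoot φ₁ × AdjoinRoot φ₂, ∃ g : Polynomial ℂ,
        (AdjoinRoot.mk φ₁ (g * vecPoly n₁ f₁), AdjoinRoot.mk φ₂ (g * vecPoly n₂ f₂)) = b) := by
    constructor
    · intro h b
      obtain ⟨w, hw⟩ := hΦbij.surjective b
      obtain ⟨v, hv⟩ := h w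
      exact ⟨vecPoly m v, by rw [← hw, ← hv, step2]⟩
    · intro h w
      obtain ⟨g, hg⟩ := h (Φ w)
      set g' := g %ₘ (φ₁ * φ₂) with hg'
      have hmm : (φ₁ * φ₂).Monic := hm₁.mul hm₂
      have hdeg : (φ₁ * φ₂).degree = (m : ℕ) := by
        rw [Polynomial.degree_eq_natDegree hmm.ne_zero,
          Polynomial.natDegree_mul hm₁.ne_zero hm₂.ne_zero, hd₁, hd₂]
      have hg'deg : g'.degree < (m : ℕ) := hdeg ▸ Polynomial.degree_modByMonic_lt g hmm
      set v : Fin m → ℂ := fun j => g'.coeff j with hv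
      have hvg : vecPoly m v = g' := vecPoly_eq_of_degree_lt m g' hg'deg
      have hdvd : φ₁ * φ₂ ∣ g - g' := by
        rw [hg', Polynomial.modByMonic_eq_sub_mul_div g (φ₁ * φ₂)]
        exact ⟨g /ₘ (φ₁ * φ₂), by ring⟩
      obtain ⟨q, hq⟩ := hdvd
      refine ⟨v, hΦbij.injective ?_⟩
      rw [step2, hvg, ← hg]
      rw [Prod.ext_iff]
      constructor
      · rw [AdjoinRoot.mk_eq_mk]
        exact ⟨-(φ₂ * q * vecPoly n₁ f₁), by linear_combination -(vecPoly n₁ f₁) * hq⟩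
      · rw [AdjoinRoot.mk_eq_mk]
        exact ⟨-(φ₁ * q * vecPoly n₂ f₂), by linear_combination -(vecPoly n₂ f₂) * hq⟩
  rw [step3, key_iff]
end
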